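/- Let K be a subfield of Q̄ and let α ∈ G. Then the orbit Orb_K(α) of α under the action of Aut(Q̄/K) on G contains exactly δ_K(α) distinct elements, i.e., |Orb_K(α)| = δ_K(α). -/

import Mathlib

/-!
The orbit of `u` in `Q̄^×` under `Aut(Q̄/K)` is the set of `K`-conjugates of `u`, which is finite,
and for `m ≠ 0` the `K`-conjugates of `u^m` are the `m`-th powers of those of `u`; since `Q̄/K`
is Galois there are `[K(u^m) : K]` of them. If `(σu)^m = (τu)^m` with `m ≠ 0`, then `σu` and `τu`
differ by a root of unity, so the orbit of the class of `u` in `G` has at most `[K(u^m) : K]`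
elements. Conversely, as the orbit of `u` is finite, a single `n ≠ 0` kills all the roots of
unity `(σu)⁻¹ τu` that occur, and then the classes of `σu` and `τu` agree exactly when
`(σu)^n = (τu)^n`; so the bound is attained at `m = n`.
-/
noncomputable section

/-- A fixed algebraic closure of `ℚ`. -/
abbrev Qbar : Type := AlgebraicClosure ℚ

/-- The primitive integer minimal polynomial of an algebraic number. -/
noncomputable def intMinpoly (α : Qbar) : Polynomial ℤ :=
  (IsLocalization.integerNormalization (nonZeroDivisors ℤ) (minpoly ℚ α)).primPart

/-- The absolute logarithmic Weil height of an algebraic number, defined via the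
(logarithmic) Mahler measure of its primitive integer minimal polynomial. -/
noncomputable def weilHeight (α : Qbar) : ℝ :=
  ((minpoly ℚ α).natDegree : ℝ)⁻¹ *
    (Real.log |((intMinpoly α).leadingCoeff : ℝ)| +
      (((intMinpoly α).map (Int.castRingHom ℂ)).roots.map
        (fun z => Real.log (max 1 ‖z‖))).sum)

/-- `σ` is an automorphism of `Q̄` fixing `K` pointwise, i.e. `σ ∈ Aut(Q̄/K)`. -/
def fixes (K : Subfield Qbar) (σ : Qbar ≃+* Qbar) : Prop := ∀ x ∈ K, σ x = x

/-- The group `Q̄^×`. -/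
abbrev Qx : Type := Qbarˣ

/-- `G = Q̄^× / Tor(Q̄^×)`. -/
abbrev GG : Type := Qx ⧸ CommGroup.torsion Qx

/-- The Weil height descends to `G`: since `h` is constant on cosets of the torsion
subgroup, the infimum below equals the common value of `h` at any representative. -/
noncomputable def hG (x : GG) : ℝ :=
  sInf {r : ℝ | ∃ u : Qx, (QuotientGroup.mk u : GG) = x ∧ r = weilHeight (u : Qbar)}

/-- The image `G_K` of `K^×` in `G`. -/
def GK (K : Subfield Qbar) : Set GG :=
  {x | ∃ u : Qx, (u : Qbar) ∈ K ∧ (QuotientGroup.mk u : GG) = x}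

/-- `span_ℚ G_K = { β ∈ G : β^m ∈ G_K for some nonzero integer m }`. -/
def spanGK (K : Subfield Qbar) : Set GG :=
  {x | ∃ m : ℤ, m ≠ 0 ∧ x ^ m ∈ GK K}

/-- The action of an automorphism of `Q̄` on `G = Q̄^×/Tor(Q̄^×)`. -/
def autG (σ : Qbar ≃+* Qbar) : GG →* GG :=
  QuotientGroup.map _ _ (Units.map (σ : Qbar →* Qbar))
    (fun u hu => by
      rw [Subgroup.mem_comap]
      rw [CommGroup.mem_torsion] at hu ⊢
      exact MonoidHom.isOfFinOrder _ hu)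

/-- The orbit of `x ∈ G` under the action of `Aut(Q̄/K)` on `G`. -/
def OrbG (K : Subfield Qbar) (x : GG) : Set GG :=
  {y | ∃ σ : Qbar ≃+* Qbar, fixes K σ ∧ y = autG σ x}

/-- `E_K = { α ∈ G : ∏_{β ∈ Orb_K(α)} β = 1 }`. -/
def EK (K : Subfield Qbar) : Set GG :=
  {x | (∏ᶠ y ∈ OrbG K x, y) = 1}

/-- `δ_K(α) = min { [K(α^m) : K] : m a nonzero integer }`, where `[K(β) : K]` is the
degree of the minimal polynomial of `β` over `K`. -/
noncomputable def deltaK (K : Subfield Qbar) (α : Qbar) : ℕ :=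
  letI : Algebra ↥K Qbar := K.subtype.toAlgebra
  sInf {d : ℕ | ∃ m : ℤ, m ≠ 0 ∧ d = (minpoly ↥K (α ^ m)).natDegree}

theorem Set.ncard_range_le_of_factorsThrough {ι α β : Type*} {f : ι → α} {g : ι → β}
    (hf : (Set.range f).Finite) (h : g.FactorsThrough f) :
    (Set.range g).ncard ≤ (Set.range f).ncard := by
  rcases isEmpty_or_nonempty ι with hι | ⟨⟨i⟩⟩
  · simp [Set.range_eq_empty]
  · rw [← h.extend_comp fun _ => g i, Set.range_comp]
    exact Set.ncard_image_le hf

theorem Set.Finite.exists_pos_pow_eq_one {M : Type*} [Monoid M] {S : Set M} (hS : S.Finite)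
    (h : ∀ x ∈ S, IsOfFinOrder x) : ∃ n, 0 < n ∧ ∀ x ∈ S, x ^ n = 1 :=
  ⟨∏ x ∈ hS.toFinset, orderOf x,
    Finset.prod_pos fun x hx => (h x (hS.mem_toFinset.1 hx)).orderOf_pos,
    fun _ hx => orderOf_dvd_iff_pow_eq_one.1 (Finset.dvd_prod_of_mem _ (hS.mem_toFinset.2 hx))⟩

namespace CommGroup

variable {A : Type*} [CommGroup A]

theorem mk_torsion_eq_iff {x y : A} :
    (x : A ⧸ torsion A) = y ↔ ∃ n : ℤ, n ≠ 0 ∧ x ^ n = y ^ n := by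
  rw [QuotientGroup.eq, mem_torsion, isOfFinOrder_iff_zpow_eq_one]
  simp only [mul_zpow, inv_zpow, inv_mul_eq_one]

theorem exists_zpow_eq_of_mk_torsion_eq {T : Set A} (hT : T.Finite) :
    ∃ n : ℤ, n ≠ 0 ∧ ∀ x ∈ T, ∀ y ∈ T, (x : A ⧸ torsion A) = y → x ^ n = y ^ n := by
  obtain ⟨n, hn, hpow⟩ := ((hT.image2 (fun x y => x⁻¹ * y) hT).inter_of_left
    {z : A | IsOfFinOrder z}).exists_pos_pow_eq_one fun z hz => hz.2
  refine ⟨n, by exact_mod_cast hn.ne', fun x hx y hy hxy => ?_⟩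
  have := hpow _ ⟨Set.mem_image2_of_mem hx hy, (mem_torsion _).1 (QuotientGroup.eq.1 hxy)⟩
  rwa [mul_pow, inv_pow, inv_mul_eq_one, ← zpow_natCast, ← zpow_natCast] at this

end CommGroup

section Galois

variable (F : Type*) {L : Type*} [Field F] [Field L] [Algebra F L]

theorem orbit_eq_rootSet_minpoly [Normal F L] (x : L) :
    MulAction.orbit Gal(L/F) x = (minpoly F x).rootSet L := by
  ext y
  rw [← isConjRoot_iff_mem_minpoly_rootSet (Algebra.IsIntegral.isIntegral x),
    isConjRoot_iff_orbitRel, MulAction.orbitRel_apply, MulAction.mem_orbit_symm]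

theorem finite_orbit [Normal F L] (x : L) : (MulAction.orbit Gal(L/F) x).Finite := by
  rw [orbit_eq_rootSet_minpoly]
  exact Set.toFinite _

def orbitModTorsion (u : Lˣ) : Set (Lˣ ⧸ CommGroup.torsion Lˣ) :=
  Set.range fun σ : Gal(L/F) => QuotientGroup.mk (Units.map (σ : L →* L) u)

theorem apply_zpow_eq_apply_zpow_iff (u : Lˣ) (m : ℤ) (σ τ : Gal(L/F)) :
    σ ((u : L) ^ m) = τ ((u : L) ^ m) ↔
      Units.map (σ : L →* L) u ^ m = Units.map (τ : L →* L) u ^ m := by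
  simp only [Units.ext_iff, Units.val_zpow_eq_zpow_val, Units.coe_map, map_zpow₀]
  rfl

variable [IsGalois F L]

theorem ncard_orbit_eq_natDegree_minpoly (x : L) :
    (MulAction.orbit Gal(L/F) x).ncard = (minpoly F x).natDegree := by
  rw [orbit_eq_rootSet_minpoly, ← Nat.card_coe_set_eq, Nat.card_eq_fintype_card,
    Polynomial.card_rootSet_eq_natDegree (Algebra.IsSeparable.isSeparable F x)
      (Normal.splits' x)]

theorem ncard_orbitModTorsion_le (u : Lˣ) {m : ℤ} (hm : m ≠ 0) :
    (orbitModTorsion F u).ncard ≤ (minpoly F ((u : L) ^ m)).natDegree := by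
  rw [← ncard_orbit_eq_natDegree_minpoly F]
  exact Set.ncard_range_le_of_factorsThrough (finite_orbit F _) fun σ τ h =>
    CommGroup.mk_torsion_eq_iff.2 ⟨m, hm, (apply_zpow_eq_apply_zpow_iff F u m σ τ).1 h⟩

theorem exists_natDegree_le_ncard_orbitModTorsion (u : Lˣ) :
    ∃ n : ℤ, n ≠ 0 ∧ (minpoly F ((u : L) ^ n)).natDegree ≤ (orbitModTorsion F u).ncard := by
  set T := Set.range fun σ : Gal(L/F) => Units.map (σ : L →* L) u
  have hT : T.Finite := by
    refine ((finite_orbit F (u : L)).preimage Units.val_injective.injOn).subset ?_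
    rintro _ ⟨σ, rfl⟩
    exact ⟨σ, rfl⟩
  obtain ⟨n, hn, hpow⟩ := CommGroup.exists_zpow_eq_of_mk_torsion_eq hT
  refine ⟨n, hn, ?_⟩
  rw [← ncard_orbit_eq_natDegree_minpoly F]
  refine Set.ncard_range_le_of_factorsThrough ?_ fun σ τ h =>
    (apply_zpow_eq_apply_zpow_iff F u n σ τ).2 (hpow _ ⟨σ, rfl⟩ _ ⟨τ, rfl⟩ h)
  exact (hT.image QuotientGroup.mk).subset (Set.range_subset_iff.2 fun σ => ⟨_, ⟨σ, rfl⟩, rfl⟩)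

theorem isLeast_ncard_orbitModTorsion (u : Lˣ) :
    IsLeast {d | ∃ m : ℤ, m ≠ 0 ∧ d = (minpoly F ((u : L) ^ m)).natDegree}
      (orbitModTorsion F u).ncard := by
  obtain ⟨n, hn, hle⟩ := exists_natDegree_le_ncard_orbitModTorsion F u
  refine ⟨⟨n, hn, le_antisymm (ncard_orbitModTorsion_le F u hn) hle⟩, ?_⟩
  rintro d ⟨m, hm, rfl⟩
  exact ncard_orbitModTorsion_le F u hm

end Galois

instance (K : Subfield Qbar) : IsGalois K Qbar :=
  -- instance search picks `DivisionRing.toRatAlgebra` for `Algebra ℚ Qbar`, which is only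
  -- defeq, not reducibly equal, to the algebra structure of `AlgebraicClosure ℚ`
  haveI : Algebra.IsAlgebraic ℚ Qbar := AlgebraicClosure.isAlgebraic ℚ
  haveI : Algebra.IsAlgebraic K Qbar := .tower_top (K := ℚ) K
  haveI : IsAlgClosure K Qbar := ⟨inferInstance, inferInstance⟩
  { to_normal := IsAlgClosure.normal K Qbar }

theorem orbG_mk_eq_orbitModTorsion (K : Subfield Qbar) (u : Qx) :
    OrbG K (QuotientGroup.mk u : GG) = orbitModTorsion K u := by
  ext y
  constructor
  · rintro ⟨σ, hσ, rfl⟩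
    exact ⟨AlgEquiv.ofRingEquiv (f := σ) fun x => hσ x x.2, rfl⟩
  · rintro ⟨σ, rfl⟩
    exact ⟨σ.toRingEquiv, fun x hx => σ.commutes ⟨x, hx⟩, rfl⟩

theorem stmt8 (K : Subfield Qbar) (u : Qx) :
    (OrbG K (QuotientGroup.mk u : GG)).ncard = deltaK K (u : Qbar) := by
  rw [orbG_mk_eq_orbitModTorsion]
  exact (isLeast_ncard_orbitModTorsion K u).csInf_eq.symm

end
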